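/- Suppose P(a,I,J,K) is nonempty and b ∈ F_a, the smallest face of the derived arrangement δA_o containing a. Then P(b,I,J,K) is nonempty, and P(a,I,J,K) is bounded if and only if P(b,I,J,K) is bounded. -/

import Mathlib

open RealInnerProductSpace

noncomputable section

/-- `ℝ^n` with the Euclidean inner product. -/
abbrev Euc (n : ℕ) := EuclideanSpace ℝ (Fin n)

/-- Standard scalar product on `ℝ^m` (as tuples). -/
def dotm {m : ℕ} (c a : Fin m → ℝ) : ℝ := ∑ i, c i * a i

/-- `C` is a circuit: the family `{u i : i ∈ C}` is linearly dependent but every proper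
subfamily is linearly independent. -/
def IsCircuit {n m : ℕ} (u : Fin m → Euc n) (C : Set (Fin m)) : Prop :=
  ¬ LinearIndependent ℝ (fun i : C => u i) ∧
    ∀ D : Set (Fin m), D ⊂ C → LinearIndependent ℝ (fun i : D => u i)

/-- `c` is a circuit vector: `∑ i, c i • u i = 0` and the support of `c` is a circuit. -/
def IsCircuitVector {n m : ℕ} (u : Fin m → Euc n) (c : Fin m → ℝ) : Prop :=
  (∑ i, c i • u i) = 0 ∧ IsCircuit u {i | c i ≠ 0}

/-- `a` and `b` lie in the same open face of the derived arrangement `δA_o`: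
for every circuit vector `c`, `⟨c,a⟩` and `⟨c,b⟩` have the same sign. -/
def SameOpenFace {n m : ℕ} (u : Fin m → Euc n) (a b : Fin m → ℝ) : Prop :=
  ∀ c : Fin m → ℝ, IsCircuitVector u c →
    SignType.sign (dotm c a) = SignType.sign (dotm c b)

/-- `I, J, K` is a partition of `{1,…,m}` into pairwise disjoint (possibly empty) sets. -/
def IsTripartition {m : ℕ} (I J K : Set (Fin m)) : Prop :=
  I ∪ J ∪ K = Set.univ ∧ Disjoint I J ∧ Disjoint I K ∧ Disjoint J K

/-- The convex polyhedron `P(a,I,J,K)`. -/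
def poly {n m : ℕ} (u : Fin m → Euc n) (a : Fin m → ℝ) (I J K : Set (Fin m)) :
    Set (Euc n) :=
  {x | (∀ i ∈ I, ⟪u i, x⟫ = a i) ∧ (∀ j ∈ J, ⟪u j, x⟫ ≤ a j) ∧ (∀ k ∈ K, a k ≤ ⟪u k, x⟫)}

/-- The normal cone of `P` at `x`. -/
def normalCone {n : ℕ} (P : Set (Euc n)) (x : Euc n) : Set (Euc n) :=
  {v | ∀ y ∈ P, ⟪v, y⟫ ≤ ⟪v, x⟫}

/-- The normal fan of `P`: the family of normal cones at points of `P`. -/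
def normalFan {n : ℕ} (P : Set (Euc n)) : Set (Set (Euc n)) :=
  {N | ∃ x ∈ P, N = normalCone P x}

/-- A face of a convex polyhedron: the empty set or an exposed face. -/
def IsFace {n : ℕ} (P F : Set (Euc n)) : Prop :=
  F = ∅ ∨ ∃ v : Euc n, F = {x ∈ P | ∀ y ∈ P, ⟪v, y⟫ ≤ ⟪v, x⟫}

/-- The set of sign vectors of the parallel translation `A_a`. -/
def signSet {n m : ℕ} (u : Fin m → Euc n) (a : Fin m → ℝ) : Set (Fin m → SignType) :=
  {s | ∃ x : Euc n, ∀ i, s i = SignType.sign (⟪u i, x⟫ - a i)}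

/-- `b` belongs to `F_a`, the smallest face of the derived arrangement containing `a`. -/
def MemMinFace {n m : ℕ} (u : Fin m → Euc n) (a b : Fin m → ℝ) : Prop :=
  ∀ c : Fin m → ℝ, IsCircuitVector u c →
    (dotm c a = 0 → dotm c b = 0) ∧ (0 < dotm c a → 0 ≤ dotm c b) ∧
    (dotm c a < 0 → dotm c b ≤ 0)

/-!
By Farkas' lemma, `P(v, I, J, K)` is nonempty iff `dotm c v ≥ 0` for every `c` with
`∑ cᵢ uᵢ = 0`, `c ≥ 0` on `J` and `c ≤ 0` on `K` (the feasible `v` form a subspace plus a finitely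
generated cone, which is closed by conic Carathéodory, so the separation theorem applies).
Every such `c` is a nonnegative combination of circuit vectors conformal to it, which satisfy the
same sign conditions; as `P(a)` is nonempty, `dotm d a ≥ 0` for each of them, and `b ∈ F_a` turns
this into `dotm d b ≥ 0`. Finally, a nonempty `P(v)` is bounded iff its recession cone `P(0)` is
`{0}`, which does not depend on `v`.
-/

open Function Set

section Conformal

variable {ι : Type*}

def Conforms (d c : ι → ℝ) : Prop := ∀ i, d i ≠ 0 → 0 < d i * c i

namespace Conforms

variable {c d f : ι → ℝ}

theorem refl (c : ι → ℝ) : Conforms c c := fun _ hi => mul_self_pos.2 hi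

theorem trans (hdf : Conforms d f) (hfc : Conforms f c) : Conforms d c := by
  intro i hi
  have hdf_i := hdf i hi
  have hfc_i := hfc i (right_ne_zero_of_mul hdf_i.ne')
  exact pos_of_mul_pos_left (by nlinarith [mul_pos hdf_i hfc_i]) (mul_self_nonneg (f i))

theorem support_subset (h : Conforms d c) : support d ⊆ support c :=
  fun i hi => right_ne_zero_of_mul (h i hi).ne'

theorem nonneg (h : Conforms d c) {i : ι} (hc : 0 ≤ c i) : 0 ≤ d i := by
  by_contra! hd
  nlinarith [h i hd.ne]

theorem nonpos (h : Conforms d c) {i : ι} (hc : c i ≤ 0) : d i ≤ 0 := by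
  by_contra! hd
  nlinarith [h i hd.ne']

theorem ncard_support_lt [Finite ι] (h : Conforms d c) {i : ι} (hc : c i ≠ 0) (hd : d i = 0) :
    (support d).ncard < (support c).ncard :=
  ncard_lt_ncard (ssubset_of_subset_not_subset h.support_subset fun hsub => hsub hc hd)

end Conforms

theorem exists_conforms_sub_smul [Fintype ι] {c g : ι → ℝ} (hsupp : support g ⊆ support c)
    (hpos : ∃ i, 0 < g i * c i) :
    ∃ r : ℝ, 0 < r ∧ Conforms (c - r • g) c ∧ ∃ i, c i ≠ 0 ∧ (c - r • g) i = 0 := by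
  classical
  set T := Finset.univ.filter fun i => 0 < g i * c i
  have hT : T.Nonempty := by simpa [T, Finset.filter_nonempty_iff] using hpos
  obtain ⟨i₀, hi₀, hr⟩ := T.exists_mem_eq_inf' hT fun i => c i / g i
  set r := T.inf' hT fun i => c i / g i
  have hgc : 0 < g i₀ * c i₀ := (Finset.mem_filter.1 hi₀).2
  have hg₀ : g i₀ ≠ 0 := left_ne_zero_of_mul hgc.ne'
  have hr₀ : 0 < r := by
    rw [hr]
    exact div_pos_iff.2 (by rcases mul_pos_iff.1 hgc with h | h <;> tauto)
  refine ⟨r, hr₀, fun i hi => ?_, i₀, right_ne_zero_of_mul hgc.ne', ?_⟩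
  · have hci : c i ≠ 0 := fun h0 =>
      hi (by simp [h0, notMem_support.1 (hsupp.mt (not_not.2 h0))])
    refine lt_of_le_of_ne ?_ (mul_ne_zero hi hci).symm
    simp only [Pi.sub_apply, Pi.smul_apply, smul_eq_mul] at hi ⊢
    by_cases hiT : 0 < g i * c i
    · have hle : r ≤ c i / g i := T.inf'_le _ (Finset.mem_filter.2 ⟨Finset.mem_univ _, hiT⟩)
      have hgi : g i ≠ 0 := left_ne_zero_of_mul hiT.ne'
      have hmul : r * (g i * c i) ≤ c i / g i * (g i * c i) :=
        mul_le_mul_of_nonneg_right hle hiT.le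
      rw [div_mul_eq_mul_div, mul_div_assoc, mul_div_cancel_left₀ _ hgi] at hmul
      nlinarith
    · nlinarith [mul_le_mul_of_nonneg_left (not_lt.1 hiT) hr₀.le, mul_self_nonneg (c i)]
  · simp [hr, div_mul_cancel₀ _ hg₀]

theorem exists_conforms_sub_smul_of_ne_zero [Fintype ι] {c g : ι → ℝ}
    (hsupp : support g ⊆ support c) (hg : g ≠ 0) :
    ∃ r : ℝ, Conforms (c - r • g) c ∧ ∃ i, c i ≠ 0 ∧ (c - r • g) i = 0 := by
  obtain ⟨i, hi⟩ := Function.ne_iff.1 hg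
  rcases (mul_ne_zero hi (hsupp hi)).lt_or_gt with hneg | hpos
  · obtain ⟨r, -, h⟩ := exists_conforms_sub_smul (c := c) (g := -g) (by rwa [support_neg])
      ⟨i, by simpa [neg_mul] using hneg⟩
    exact ⟨-r, by simpa [sub_eq_add_neg] using h⟩
  · obtain ⟨r, -, h⟩ := exists_conforms_sub_smul hsupp ⟨i, hpos⟩
    exact ⟨r, h⟩

end Conformal

section Dependence

variable {ι V : Type*} [Fintype ι] [AddCommGroup V] [Module ℝ V] {g : ι → V}

theorem exists_dependence_of_not_linearIndepOn {s : Set ι} (h : ¬ LinearIndepOn ℝ g s) :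
    ∃ f : ι → ℝ, support f ⊆ s ∧ f ≠ 0 ∧ ∑ i, f i • g i = 0 := by
  obtain ⟨f, hfs, hf, hf0⟩ := linearDepOn_iff'.1 h
  refine ⟨f, by simpa [Finsupp.mem_supported] using hfs, by simpa using hf0, ?_⟩
  rwa [Finsupp.linearCombination_apply, Finsupp.sum_fintype _ _ (by simp)] at hf

theorem not_linearIndepOn_support {f : ι → ℝ} (hf0 : f ≠ 0) (hf : ∑ i, f i • g i = 0) :
    ¬ LinearIndepOn ℝ g (support f) := by
  rw [linearDepOn_iff']
  refine ⟨Finsupp.equivFunOnFinite.symm f, ?_, ?_,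
    fun h => hf0 (funext fun i => by simpa using DFunLike.congr_fun h i)⟩
  · simp [Finsupp.mem_supported]
  · rwa [Finsupp.linearCombination_apply, Finsupp.sum_fintype _ _ (by simp)]

theorem sum_sub_smul_smul (c f : ι → ℝ) (r : ℝ) :
    ∑ i, (c - r • f) i • g i = ∑ i, c i • g i - r • ∑ i, f i • g i := by
  simp [sub_smul, smul_smul, Finset.smul_sum, Finset.sum_sub_distrib]

end Dependence

section Circuits

variable {n m : ℕ} {u : Fin m → Euc n}

theorem IsCircuitVector.ne_zero {c : Fin m → ℝ} (hc : IsCircuitVector u c) : c ≠ 0 := by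
  rintro rfl
  exact hc.2.1 (by simp)

theorem exists_isCircuitVector_conforms {c : Fin m → ℝ} (hc0 : c ≠ 0)
    (hc : ∑ i, c i • u i = 0) : ∃ d, IsCircuitVector u d ∧ Conforms d c := by
  induction hN : (support c).ncard using Nat.strong_induction_on generalizing c with
  | _ N ih =>
  by_cases hcirc : IsCircuit u (support c)
  · exact ⟨c, ⟨hc, hcirc⟩, Conforms.refl c⟩
  obtain ⟨D, hD, hDdep⟩ : ∃ D ⊂ support c, ¬ LinearIndepOn ℝ u D := by
    have h := not_and.1 hcirc (not_linearIndepOn_support hc0 hc)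
    push Not at h
    exact h
  obtain ⟨f, hfD, hf0, hf⟩ := exists_dependence_of_not_linearIndepOn hDdep
  obtain ⟨r, hconf, i, hci, hi⟩ :=
    exists_conforms_sub_smul_of_ne_zero (hfD.trans hD.subset) hf0
  obtain ⟨j, hjc, hjD⟩ := exists_of_ssubset hD
  have hj : (c - r • f) j ≠ 0 := by
    simpa [notMem_support.1 (fun h => hjD (hfD h))] using hjc
  obtain ⟨d, hd, hdc⟩ := ih _ (hN ▸ hconf.ncard_support_lt hci hi)
    (Function.ne_iff.2 ⟨j, hj⟩) (by rw [sum_sub_smul_smul, hc, hf, smul_zero, sub_zero]) rfl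
  exact ⟨d, hd, hdc.trans hconf⟩

theorem mem_hull_isCircuitVector {c : Fin m → ℝ} (hc : ∑ i, c i • u i = 0) :
    c ∈ PointedCone.hull ℝ {d | IsCircuitVector u d ∧ Conforms d c} := by
  induction hN : (support c).ncard using Nat.strong_induction_on generalizing c with
  | _ N ih =>
  obtain rfl | hc0 := eq_or_ne c 0
  · exact zero_mem _
  obtain ⟨d, hd, hdc⟩ := exists_isCircuitVector_conforms hc0 hc
  obtain ⟨i, hi⟩ := Function.ne_iff.1 hd.ne_zero
  obtain ⟨r, hr, hconf, j, hcj, hj⟩ :=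
    exists_conforms_sub_smul hdc.support_subset ⟨i, hdc i hi⟩
  have hrest := ih _ (hN ▸ hconf.ncard_support_lt hcj hj)
    (by rw [sum_sub_smul_smul, hc, hd.1, smul_zero, sub_zero]) rfl
  have hmono : {e | IsCircuitVector u e ∧ Conforms e (c - r • d)} ⊆
      {e | IsCircuitVector u e ∧ Conforms e c} := fun _ he => ⟨he.1, he.2.trans hconf⟩
  have hsplit :
      c - r • d + r • d ∈ PointedCone.hull ℝ {e | IsCircuitVector u e ∧ Conforms e c} :=
    add_mem (Submodule.span_mono hmono hrest)
      (PointedCone.smul_mem _ hr.le (Submodule.subset_span ⟨hd, hdc⟩))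
  rwa [sub_add_cancel] at hsplit

end Circuits

namespace PointedCone

variable {ι V : Type*} [AddCommGroup V] [Module ℝ V]

theorem mem_hull_range_iff [Fintype ι] {g : ι → V} {v : V} :
    v ∈ hull ℝ (range g) ↔ ∃ t : ι → ℝ, 0 ≤ t ∧ ∑ i, t i • g i = v := by
  rw [Submodule.mem_span_range_iff_exists_fun]
  constructor
  · rintro ⟨t, rfl⟩
    exact ⟨fun i => t i, fun i => (t i).2, rfl⟩
  · rintro ⟨t, ht, rfl⟩
    exact ⟨fun i => ⟨t i, ht i⟩, rfl⟩

theorem exists_linearIndepOn_mem_hull_image [Fintype ι] {g : ι → V} {v : V}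
    (hv : v ∈ hull ℝ (range g)) : ∃ s : Set ι, LinearIndepOn ℝ g s ∧ v ∈ hull ℝ (g '' s) := by
  obtain ⟨t, ht, rfl⟩ := mem_hull_range_iff.1 hv
  clear hv
  induction hN : (support t).ncard using Nat.strong_induction_on generalizing t with
  | _ N ih =>
  by_cases hind : LinearIndepOn ℝ g (support t)
  · refine ⟨_, hind, Submodule.sum_mem _ fun i _ => ?_⟩
    obtain hi | hi := eq_or_ne (t i) 0
    · simp [hi]
    · exact smul_mem _ (ht i) (Submodule.subset_span (mem_image_of_mem g hi))
  obtain ⟨f, hft, hf0, hf⟩ := exists_dependence_of_not_linearIndepOn hind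
  obtain ⟨r, hconf, i, hti, hi⟩ := exists_conforms_sub_smul_of_ne_zero hft hf0
  have hsum := sum_sub_smul_smul (g := g) t f r
  rw [hf, smul_zero, sub_zero] at hsum
  rw [← hsum]
  exact ih _ (hN ▸ hconf.ncard_support_lt hti hi) _ (fun j => hconf.nonneg (ht j)) rfl

variable [TopologicalSpace V] [IsTopologicalAddGroup V] [ContinuousSMul ℝ V] [T2Space V]

theorem isClosed_hull_range_of_linearIndependent [Fintype ι] {g : ι → V}
    (hg : LinearIndependent ℝ g) : IsClosed (hull ℝ (range g) : Set V) := by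
  have hcone : (hull ℝ (range g) : Set V) = Fintype.linearCombination ℝ g '' Ici 0 := by
    ext v
    simp [mem_hull_range_iff, Fintype.linearCombination_apply]
  rw [hcone]
  exact (LinearMap.isClosedEmbedding_of_injective (LinearMap.ker_eq_bot.2
    hg.fintypeLinearCombination_injective)).isClosedMap _ isClosed_Ici

theorem isClosed_hull_range [Finite ι] (g : ι → V) : IsClosed (hull ℝ (range g) : Set V) := by
  classical
  have := Fintype.ofFinite ι
  have hunion : (hull ℝ (range g) : Set V) =
      ⋃ s : {s : Set ι // LinearIndepOn ℝ g s}, hull ℝ (g '' s.1) := by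
    ext v
    refine ⟨fun hv => ?_, fun hv => ?_⟩
    · obtain ⟨s, hs, hvs⟩ := exists_linearIndepOn_mem_hull_image hv
      exact mem_iUnion.2 ⟨⟨s, hs⟩, hvs⟩
    · obtain ⟨s, hvs⟩ := mem_iUnion.1 hv
      exact Submodule.span_mono (image_subset_range g s.1) hvs
  rw [hunion]
  refine isClosed_iUnion_of_finite fun s => ?_
  rw [image_eq_range]
  exact isClosed_hull_range_of_linearIndependent s.2

theorem isClosed_sup_hull_range [FiniteDimensional ℝ V] [Finite ι] (L : Submodule ℝ V)
    (g : ι → V) :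
    IsClosed ((ofSubmodule L ⊔ hull ℝ (range g) : PointedCone ℝ V) : Set V) := by
  have := Fintype.ofFinite ι
  -- `L + cone(g)` is the preimage of a cone under a linear map with kernel `L`
  let π : V →ₗ[ℝ] Fin _ → ℝ := (Module.finBasis ℝ (V ⧸ L)).equivFun.toLinearMap ∘ₗ L.mkQ
  have hπ : ∀ w, π w = 0 ↔ w ∈ L := by simp [π]
  have hpre : ((ofSubmodule L ⊔ hull ℝ (range g) : PointedCone ℝ V) : Set V) =
      π ⁻¹' hull ℝ (range (π ∘ g)) := by
    ext v
    simp only [mem_preimage, SetLike.mem_coe, Submodule.mem_sup, mem_ofSubmodule_iff,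
      mem_hull_range_iff]
    constructor
    · rintro ⟨y, hy, _, ⟨t, ht, rfl⟩, rfl⟩
      exact ⟨t, ht, by simp [(hπ y).2 hy]⟩
    · rintro ⟨t, ht, h⟩
      refine ⟨v - ∑ i, t i • g i, (hπ _).1 ?_, _, ⟨t, ht, rfl⟩, sub_add_cancel _ _⟩
      rw [map_sub, map_sum, ← h]
      simp
  rw [hpre]
  exact (isClosed_hull_range _).preimage π.continuous_of_finiteDimensional

end PointedCone

section Polyhedra

variable {n m : ℕ} {u : Fin m → Euc n} {I J K : Set (Fin m)}

theorem dotm_nonneg_of_mem_hull {s : Set (Fin m → ℝ)} {b c : Fin m → ℝ}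
    (hc : c ∈ PointedCone.hull ℝ s) (hs : ∀ d ∈ s, 0 ≤ dotm d b) : 0 ≤ dotm c b := by
  induction hc using Submodule.span_induction with
  | mem d hd => exact hs d hd
  | zero => simp [dotm]
  | add x y _ _ hx hy => simpa [dotm, add_mul, Finset.sum_add_distrib] using add_nonneg hx hy
  | smul r x _ hx =>
    simpa [dotm, ← Nonneg.coe_smul, mul_assoc, ← Finset.mul_sum] using mul_nonneg r.2 hx

theorem LinearMap.apply_eq_dotm (f : (Fin m → ℝ) →ₗ[ℝ] ℝ) (v : Fin m → ℝ) :
    f v = dotm (fun i => f (Pi.single i 1)) v := by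
  have hsingle : ∀ i, Pi.single i (v i) = v i • Pi.single i (1 : ℝ) := fun i => by
    rw [← Pi.single_smul', smul_eq_mul, mul_one]
  conv_lhs => rw [← Finset.univ_sum_single v]
  simp [dotm, hsingle, mul_comm]

def IsDualFeasible (u : Fin m → Euc n) (J K : Set (Fin m)) (c : Fin m → ℝ) : Prop :=
  ∑ i, c i • u i = 0 ∧ (∀ j ∈ J, 0 ≤ c j) ∧ ∀ k ∈ K, c k ≤ 0

theorem IsDualFeasible.of_conforms {c d : Fin m → ℝ} (hc : IsDualFeasible u J K c)
    (hd : ∑ i, d i • u i = 0) (hdc : Conforms d c) : IsDualFeasible u J K d :=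
  ⟨hd, fun j hj => hdc.nonneg (hc.2.1 j hj), fun k hk => hdc.nonpos (hc.2.2 k hk)⟩

theorem IsDualFeasible.dotm_nonneg (hcover : I ∪ J ∪ K = univ) {a c : Fin m → ℝ} {x : Euc n}
    (hx : x ∈ poly u a I J K) (hc : IsDualFeasible u J K c) : 0 ≤ dotm c a := by
  have hzero : ∑ i, c i * ⟪u i, x⟫ = 0 := by
    simp_rw [← real_inner_smul_left, ← sum_inner, hc.1, inner_zero_left]
  have hterm : ∀ i, 0 ≤ c i * (a i - ⟪u i, x⟫) := by
    intro i
    rcases hcover ▸ mem_univ i with (hi | hi) | hi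
    · simp [hx.1 i hi]
    · exact mul_nonneg (hc.2.1 i hi) (sub_nonneg.2 (hx.2.1 i hi))
    · exact mul_nonneg_of_nonpos_of_nonpos (hc.2.2 i hi) (sub_nonpos.2 (hx.2.2 i hi))
  calc 0 ≤ ∑ i, c i * (a i - ⟪u i, x⟫) := Finset.sum_nonneg fun i _ => hterm i
    _ = dotm c a := by simp [dotm, mul_sub, Finset.sum_sub_distrib, hzero]

/-- The right-hand sides `v` of the form `(⟪u i, x⟫)ᵢ + s` with `s` supported on `J ∪ K`,
nonnegative on `J` and nonpositive on `K`. -/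
def feasibleCone (u : Fin m → Euc n) (J K : Set (Fin m)) : PointedCone ℝ (Fin m → ℝ) :=
  PointedCone.ofSubmodule (LinearMap.range (LinearMap.pi fun i => innerₛₗ ℝ (u i))) ⊔
    PointedCone.hull ℝ
      (range fun i => Pi.single i (J.indicator 1 i - K.indicator (1 : Fin m → ℝ) i))

theorem poly_nonempty_of_mem_feasibleCone (hIJK : IsTripartition I J K) {v : Fin m → ℝ}
    (hv : v ∈ feasibleCone u J K) : (poly u v I J K).Nonempty := by
  obtain ⟨_, ⟨x, rfl⟩, _, hs, rfl⟩ := Submodule.mem_sup.1 hv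
  obtain ⟨t, ht, rfl⟩ := PointedCone.mem_hull_range_iff.1 hs
  obtain ⟨-, hIJ, hIK, hJK⟩ := hIJK
  refine ⟨x, fun i hi => ?_, fun j hj => ?_, fun k hk => ?_⟩
  · simp [Finset.sum_apply, Pi.single_apply, hIJ.notMem_of_mem_left hi,
      hIK.notMem_of_mem_left hi]
  · simpa [Finset.sum_apply, Pi.single_apply, hj, hJK.notMem_of_mem_left hj] using ht j
  · simpa [Finset.sum_apply, Pi.single_apply, hk, hJK.notMem_of_mem_right hk] using ht k

theorem isDualFeasible_of_nonneg_on_feasibleCone (hJK : Disjoint J K)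
    (f : (Fin m → ℝ) →ₗ[ℝ] ℝ) (hf : ∀ v ∈ feasibleCone u J K, 0 ≤ f v) :
    IsDualFeasible u J K fun i => f (Pi.single i 1) := by
  set c := fun i => f (Pi.single i 1)
  have hgen : ∀ i, Pi.single i (J.indicator 1 i - K.indicator (1 : Fin m → ℝ) i) ∈
      feasibleCone u J K := fun i =>
    Submodule.mem_sup_right (Submodule.subset_span (mem_range_self i))
  have hrange : ∀ x : Euc n, f (fun i => ⟪u i, x⟫) = ⟪∑ i, c i • u i, x⟫ := fun x => by
    rw [LinearMap.apply_eq_dotm f, dotm, sum_inner]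
    exact Finset.sum_congr rfl fun i _ => (real_inner_smul_left _ _ _).symm
  have horth : ∀ x : Euc n, ⟪∑ i, c i • u i, x⟫ = 0 := fun x => by
    have hx : ∀ y : Euc n, (fun i => ⟪u i, y⟫) ∈ feasibleCone u J K := fun y =>
      Submodule.mem_sup_left (LinearMap.mem_range_self _ y)
    have hpos := hrange x ▸ hf _ (hx x)
    have hneg := hrange (-x) ▸ hf _ (hx (-x))
    rw [inner_neg_right] at hneg
    linarith
  refine ⟨inner_self_eq_zero.1 (horth _), fun j hj => ?_, fun k hk => ?_⟩
  · simpa [hj, hJK.notMem_of_mem_left hj] using hf _ (hgen j)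
  · simpa [hk, hJK.notMem_of_mem_right hk, Pi.single_neg, c] using hf _ (hgen k)

theorem poly_nonempty_iff_forall_isDualFeasible (hIJK : IsTripartition I J K)
    {b : Fin m → ℝ} :
    (poly u b I J K).Nonempty ↔ ∀ c, IsDualFeasible u J K c → 0 ≤ dotm c b := by
  refine ⟨fun ⟨x, hx⟩ c hc => hc.dotm_nonneg hIJK.1 hx, fun h => ?_⟩
  by_contra hempty
  obtain ⟨f, hf, hfb⟩ := ProperCone.hyperplane_separation_point
    ⟨feasibleCone u J K, PointedCone.isClosed_sup_hull_range _ _⟩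
    (mt (poly_nonempty_of_mem_feasibleCone hIJK) hempty)
  have := h _ (isDualFeasible_of_nonneg_on_feasibleCone hIJK.2.2.2 f.toLinearMap hf)
  rw [← LinearMap.apply_eq_dotm] at this
  exact hfb.not_ge this

end Polyhedra

section Boundedness

open Bornology Filter Topology

variable {n m : ℕ} {u : Fin m → Euc n} {I J K : Set (Fin m)} {a : Fin m → ℝ}

theorem zero_mem_poly_zero : (0 : Euc n) ∈ poly u 0 I J K := by
  simp [poly]

theorem add_smul_mem_poly {x w : Euc n} {t : ℝ} (hx : x ∈ poly u a I J K)
    (hw : w ∈ poly u 0 I J K) (ht : 0 ≤ t) : x + t • w ∈ poly u a I J K := by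
  obtain ⟨hxI, hxJ, hxK⟩ := hx
  obtain ⟨hwI, hwJ, hwK⟩ := hw
  refine ⟨fun i hi => ?_, fun j hj => ?_, fun k hk => ?_⟩ <;>
    simp only [inner_add_right, real_inner_smul_right]
  · simp [hxI i hi, hwI i hi]
  · nlinarith [hxJ j hj, hwJ j hj, Pi.zero_apply (M := fun _ => ℝ) j]
  · nlinarith [hxK k hk, hwK k hk, Pi.zero_apply (M := fun _ => ℝ) k]

theorem smul_mem_poly {x : Euc n} {t : ℝ} (hx : x ∈ poly u a I J K) (ht : 0 ≤ t) :
    t • x ∈ poly u (t • a) I J K := by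
  obtain ⟨hxI, hxJ, hxK⟩ := hx
  refine ⟨fun i hi => ?_, fun j hj => ?_, fun k hk => ?_⟩ <;>
    simp only [real_inner_smul_right, Pi.smul_apply, smul_eq_mul]
  · rw [hxI i hi]
  · exact mul_le_mul_of_nonneg_left (hxJ j hj) ht
  · exact mul_le_mul_of_nonneg_left (hxK k hk) ht

theorem isClosed_setOf_mem_poly :
    IsClosed {p : (Fin m → ℝ) × Euc n | p.2 ∈ poly u p.1 I J K} := by
  have hset : {p : (Fin m → ℝ) × Euc n | p.2 ∈ poly u p.1 I J K} =
      (⋂ i ∈ I, {p | ⟪u i, p.2⟫ = p.1 i}) ∩ (⋂ j ∈ J, {p | ⟪u j, p.2⟫ ≤ p.1 j}) ∩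
        ⋂ k ∈ K, {p | p.1 k ≤ ⟪u k, p.2⟫} := by
    ext
    simp [poly, and_assoc]
  rw [hset]
  refine ((isClosed_biInter fun i _ => isClosed_eq ?_ ?_).inter
    (isClosed_biInter fun j _ => isClosed_le ?_ ?_)).inter
    (isClosed_biInter fun k _ => isClosed_le ?_ ?_) <;> fun_prop

theorem eq_zero_of_mem_poly_zero_of_isBounded (hbdd : IsBounded (poly u a I J K))
    (hne : (poly u a I J K).Nonempty) {w : Euc n} (hw : w ∈ poly u 0 I J K) : w = 0 := by
  obtain ⟨x, hx⟩ := hne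
  obtain ⟨C, hC⟩ := isBounded_iff_forall_norm_le.1 hbdd
  by_contra hw0
  have hw_pos : 0 < ‖w‖ := norm_pos_iff.2 hw0
  set t := (C + ‖x‖ + 1) / ‖w‖
  have hC₀ : 0 ≤ C := (norm_nonneg x).trans (hC x hx)
  have ht : 0 ≤ t := div_nonneg (by linarith [norm_nonneg x]) hw_pos.le
  have htw : ‖t • w‖ = C + ‖x‖ + 1 := by
    rw [norm_smul, Real.norm_of_nonneg ht, div_mul_cancel₀ _ hw_pos.ne']
  have := norm_sub_le (x + t • w) x
  rw [add_sub_cancel_left] at this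
  linarith [hC _ (add_smul_mem_poly hx hw ht)]

theorem exists_ne_zero_mem_poly_zero_of_not_isBounded (h : ¬ IsBounded (poly u a I J K)) :
    ∃ w ∈ poly u 0 I J K, w ≠ 0 := by
  rw [isBounded_iff_forall_norm_le] at h
  push Not at h
  choose x hxP hxC using fun k : ℕ => h k
  have hx0 : ∀ k, 0 < ‖x k‖ := fun k => (Nat.cast_nonneg k).trans_lt (hxC k)
  have htop : Tendsto (fun k => ‖x k‖) atTop atTop :=
    tendsto_atTop_mono (fun k => (hxC k).le) tendsto_natCast_atTop_atTop
  obtain ⟨w, hw, φ, hφ, hlim⟩ := (isCompact_sphere (0 : Euc n) 1).tendsto_subseq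
    (x := fun k => ‖x k‖⁻¹ • x k) fun k => by simp [norm_smul, (hx0 k).ne']
  have hinv := (tendsto_inv_atTop_zero.comp (htop.comp hφ.tendsto_atTop)).smul_const a
  rw [zero_smul] at hinv
  have hw_mem : ((0 : Fin m → ℝ), w) ∈ {p : (Fin m → ℝ) × Euc n | p.2 ∈ poly u p.1 I J K} :=
    isClosed_setOf_mem_poly.mem_of_tendsto (hinv.prodMk_nhds hlim)
      (Eventually.of_forall fun k => smul_mem_poly (hxP (φ k)) (inv_nonneg.2 (hx0 _).le))
  refine ⟨w, hw_mem, ?_⟩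
  rintro rfl
  simp at hw

theorem isBounded_poly_iff (hne : (poly u a I J K).Nonempty) :
    IsBounded (poly u a I J K) ↔ poly u 0 I J K = {0} := by
  rw [eq_singleton_iff_unique_mem]
  refine ⟨fun hbdd => ⟨zero_mem_poly_zero,
    fun w hw => eq_zero_of_mem_poly_zero_of_isBounded hbdd hne hw⟩, fun h => ?_⟩
  by_contra hunb
  obtain ⟨w, hw, hw0⟩ := exists_ne_zero_mem_poly_zero_of_not_isBounded hunb
  exact hw0 (h.2 w hw)

end Boundedness

theorem MemMinFace.dotm_nonneg {n m : ℕ} {u : Fin m → Euc n} {a b c : Fin m → ℝ}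
    (hb : MemMinFace u a b) (hc : IsCircuitVector u c) (ha : 0 ≤ dotm c a) : 0 ≤ dotm c b := by
  obtain ⟨hzero, hpos, -⟩ := hb c hc
  rcases ha.eq_or_lt with h | h
  · exact (hzero h.symm).ge
  · exact hpos h

theorem nonempty_and_bounded_iff_of_memMinFace_general {n m : ℕ}
    (u : Fin m → Euc n)
    (a b : Fin m → ℝ) (hb : MemMinFace u a b)
    (I J K : Set (Fin m)) (hIJK : IsTripartition I J K)
    (hne : (poly u a I J K).Nonempty) :
    (poly u b I J K).Nonempty ∧
      (Bornology.IsBounded (poly u a I J K) ↔ Bornology.IsBounded (poly u b I J K)) := by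
  have hbne : (poly u b I J K).Nonempty := by
    rw [poly_nonempty_iff_forall_isDualFeasible hIJK] at hne ⊢
    intro c hc
    refine dotm_nonneg_of_mem_hull (mem_hull_isCircuitVector hc.1) fun d ⟨hd, hdc⟩ => ?_
    exact hb.dotm_nonneg hd (hne d (hc.of_conforms hd.1 hdc))
  exact ⟨hbne, by rw [isBounded_poly_iff hne, isBounded_poly_iff hbne]⟩

theorem nonempty_and_bounded_iff_of_memMinFace {n m : ℕ} (hn : 1 ≤ n) (hm : 1 ≤ m)
    (u : Fin m → Euc n) (hu : ∀ i, u i ≠ 0)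
    (a b : Fin m → ℝ) (hb : MemMinFace u a b)
    (I J K : Set (Fin m)) (hIJK : IsTripartition I J K)
    (hne : (poly u a I J K).Nonempty) :
    (poly u b I J K).Nonempty ∧
      (Bornology.IsBounded (poly u a I J K) ↔ Bornology.IsBounded (poly u b I J K)) :=
  nonempty_and_bounded_iff_of_memMinFace_general u a b hb I J K hIJK hne
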